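/- arXiv:1201.5258 — 2 statements merged into one kernel-verified Lean document; each statement's English description precedes it below -/
import Mathlib

section
/- Majorana–Wigner formula for the reduced rotation matrix: for every n : ℕ, every θ ∈ ℝ and all indices j, k ∈ {0, …, n}, the (j,k) entry of exp(−iθS₂) equals Σ_t (−1)^t · [ √( j! (n−j)! k! (n−k)! ) / ( (j−t)! (n−k−t)! t! (t−j+k)! ) ] · (cos(θ/2))^{n+j−k−2t} · (sin(θ/2))^{2t−j+k}, where the sum runs over all integers t with t ≥ 0, j − t ≥ 0, n − k − t ≥ 0 and t − j + k ≥ 0. -/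
open Matrix Complex Nat

/-- Spin operator `S₃` for `2s = n`: diagonal with entries `j - n/2`. -/
noncomputable def S3 (n : ℕ) : Matrix (Fin (n+1)) (Fin (n+1)) ℂ :=
  Matrix.diagonal fun j => (j : ℂ) - (n : ℂ) / 2

/-- Raising operator `S₊`: `(S₊)_{k+1,k} = √((k+1)(n-k))`. -/
noncomputable def Sp (n : ℕ) : Matrix (Fin (n+1)) (Fin (n+1)) ℂ :=
  Matrix.of fun j k =>
    if (j : ℕ) = (k : ℕ) + 1 then (Real.sqrt (((k : ℕ) + 1) * (n - (k : ℕ))) : ℂ) else 0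

/-- Lowering operator `S₋ = S₊ᴴ`. -/
noncomputable def Sm (n : ℕ) : Matrix (Fin (n+1)) (Fin (n+1)) ℂ := (Sp n)ᴴ

/-- `S₂ = (S₊ - S₋)/(2i)`. -/
noncomputable def S2 (n : ℕ) : Matrix (Fin (n+1)) (Fin (n+1)) ℂ :=
  (2 * Complex.I)⁻¹ • (Sp n - Sm n)

/-!
Identify `ℂ^(n+1)` with binary forms of degree `n` through `e_j ↦ x^j y^(n-j) / √(j! (n-j)!)`.
Then `S₊ = x ∂_y` and `S₋ = y ∂_x`, so `-iθS₂ = (θ/2) (y ∂_x - x ∂_y)` generates the substitution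
`x ↦ c x + s y`, `y ↦ -s x + c y` with `c = cos (θ/2)`, `s = sin (θ/2)`. Hence column `k` of
`exp (-iθS₂)` holds the normalised coefficients of `(c x + s y)^k (-s x + c y)^(n-k)`, which the
binomial theorem expands into the Majorana–Wigner sum. Rigorously: the matrix `D θ` of these
coefficients solves `D' = A D`, `D 0 = 1`, and this determines `exp (θ A)`. Forms are
dehomogenised at `y = 1`, and differentiated in `θ` coefficient by coefficient.
-/

open Polynomial

theorem NormedSpace.exp_smul_eq_of_hasDerivAt {𝔸 : Type*} [NormedRing 𝔸] [NormedAlgebra ℝ 𝔸]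
    [CompleteSpace 𝔸] {A : 𝔸} {D : ℝ → 𝔸} (hD : ∀ t, HasDerivAt D (A * D t) t) (hD0 : D 0 = 1)
    (θ : ℝ) : NormedSpace.exp (θ • A) = D θ := by
  have hH : ∀ t, HasDerivAt (fun t => NormedSpace.exp ((θ - t) • A) * D t) 0 t := fun t =>
    (((hasDerivAt_exp_smul_const (𝕂 := ℝ) A (θ - t)).scomp t
      ((hasDerivAt_id t).const_sub θ)).mul (hD t)).congr_deriv (by simp [mul_assoc])
  simpa [hD0] using
    is_const_of_deriv_eq_zero (fun t => (hH t).differentiableAt) (fun t => (hH t).deriv) 0 θ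

theorem Matrix.exp_smul_eq_of_hasDerivAt_apply {m 𝕜 : Type*} [Fintype m] [DecidableEq m]
    [RCLike 𝕜] {A : Matrix m m 𝕜} {D : ℝ → Matrix m m 𝕜}
    (hD : ∀ t i j, HasDerivAt (fun t => D t i j) ((A * D t) i j) t) (hD0 : D 0 = 1) (θ : ℝ) :
    NormedSpace.exp (θ • A) = D θ := by
  let : NormedRing (Matrix m m 𝕜) := Matrix.linftyOpNormedRing
  let : NormedAlgebra ℝ (Matrix m m 𝕜) := Matrix.linftyOpNormedAlgebra
  let : NormedAlgebra 𝕜 (Matrix m m 𝕜) := Matrix.linftyOpNormedAlgebra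
  refine NormedSpace.exp_smul_eq_of_hasDerivAt (fun t => ?_) hD0 θ
  have hsum : ∀ M : Matrix m m 𝕜, ∑ i, ∑ j, M i j • Matrix.single i j 1 = M := fun M => by
    simp_rw [Matrix.smul_single, smul_eq_mul, mul_one]
    exact (Matrix.matrix_eq_sum_single M).symm
  simpa only [hsum] using HasDerivAt.fun_sum (u := Finset.univ) fun i _ =>
    HasDerivAt.fun_sum (u := Finset.univ) fun j _ =>
      (hD t i j).smul_const (Matrix.single i j (1 : 𝕜))

namespace Polynomial

theorem C_natCast_mul_pow_pred_mul {R : Type*} [CommSemiring R] (p : R[X]) (k : ℕ) :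
    C (k : R) * p ^ (k - 1) * p = C (k : R) * p ^ k := by
  rcases k with _ | k <;> simp [pow_succ, mul_assoc]

theorem coeff_C_mul_X_add_C_pow {R : Type*} [CommSemiring R] (a b : R) (m i : ℕ) :
    ((C a * X + C b) ^ m).coeff i = a ^ i * b ^ (m - i) * m.choose i := by
  have h : (C a * X + C b) ^ m =
      ∑ l ∈ Finset.range (m + 1), C (a ^ l * b ^ (m - l) * m.choose l) * X ^ l := by
    rw [add_pow]
    refine Finset.sum_congr rfl fun l _ => ?_
    simp only [mul_pow, ← C_pow, C_mul, ← C_eq_natCast]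
    ring
  rw [h, finsetSum_coeff]
  simp only [coeff_C_mul_X_pow, Finset.sum_ite_eq, Finset.mem_range]
  split_ifs with hi
  · rfl
  · simp [Nat.choose_eq_zero_of_lt (by omega : m < i)]

section CoeffwiseDeriv

variable {𝕜 𝔸 : Type*} [NontriviallyNormedField 𝕜] [NormedCommRing 𝔸] [NormedAlgebra 𝕜 𝔸]

def HasCoeffwiseDerivAt (P : 𝕜 → 𝔸[X]) (P' : 𝔸[X]) (t : 𝕜) : Prop :=
  ∀ j, HasDerivAt (fun s => (P s).coeff j) (P'.coeff j) t

variable {P Q : 𝕜 → 𝔸[X]} {P' Q' : 𝔸[X]} {t : 𝕜}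

theorem HasCoeffwiseDerivAt.congr_deriv (h : HasCoeffwiseDerivAt P P' t) (h' : P' = Q') :
    HasCoeffwiseDerivAt P Q' t :=
  h' ▸ h

theorem HasCoeffwiseDerivAt.mul (hP : HasCoeffwiseDerivAt P P' t)
    (hQ : HasCoeffwiseDerivAt Q Q' t) :
    HasCoeffwiseDerivAt (fun s => P s * Q s) (P' * Q t + P t * Q') t := fun j => by
  simp only [coeff_add, coeff_mul, ← Finset.sum_add_distrib]
  exact HasDerivAt.fun_sum fun x _ => (hP x.1).mul (hQ x.2)

theorem HasCoeffwiseDerivAt.pow (hP : HasCoeffwiseDerivAt P P' t) (m : ℕ) :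
    HasCoeffwiseDerivAt (fun s => P s ^ m) (C (m : 𝔸) * P t ^ (m - 1) * P') t := by
  induction m with
  | zero => intro j; simpa using hasDerivAt_const t ((1 : 𝔸[X]).coeff j)
  | succ m ih =>
    simp_rw [pow_succ]
    refine (ih.mul hP).congr_deriv ?_
    rw [Nat.add_sub_cancel, Nat.cast_succ, C_add, C_1]
    linear_combination P' * C_natCast_mul_pow_pred_mul (P t) m

theorem hasCoeffwiseDerivAt_C_mul_X_add_C {f g : 𝕜 → 𝔸} {f' g' : 𝔸} (hf : HasDerivAt f f' t)
    (hg : HasDerivAt g g' t) :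
    HasCoeffwiseDerivAt (fun s => C (f s) * X + C (g s)) (C f' * X + C g') t := by
  rintro (_ | _ | j) <;> simp [coeff_C, coeff_X, hf, hg, hasDerivAt_const]

end CoeffwiseDeriv

end Polynomial

/-- `y ∂ₓ - x ∂_y` on binary forms of degree `n`, dehomogenised at `y = 1`. -/
noncomputable def rotationGenerator (n : ℕ) (f : ℂ[X]) : ℂ[X] :=
  (1 + X ^ 2) * derivative f - C (n : ℂ) * X * f

theorem coeff_rotationGenerator_zero (n : ℕ) (f : ℂ[X]) :
    (rotationGenerator n f).coeff 0 = f.coeff 1 := by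
  simp [rotationGenerator, add_mul, coeff_derivative, pow_two, mul_assoc]

theorem coeff_rotationGenerator_succ (n j : ℕ) (f : ℂ[X]) :
    (rotationGenerator n f).coeff (j + 1) = (j + 2) * f.coeff (j + 2) - (n - j) * f.coeff j := by
  rcases j with _ | j <;>
    simp [rotationGenerator, add_mul, coeff_derivative, pow_two, mul_assoc] <;> ring

/-- The form `x^k y^(n-k)` after the substitution `x ↦ c x + s y`, `y ↦ -s x + c y`
(`c = cos (θ/2)`, `s = sin (θ/2)`), dehomogenised at `y = 1`. -/
noncomputable def rotationPoly (n k : ℕ) (θ : ℝ) : ℂ[X] :=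
  (C (Real.cos (θ / 2) : ℂ) * X + C (Real.sin (θ / 2) : ℂ)) ^ k *
    (C (-Real.sin (θ / 2) : ℂ) * X + C (Real.cos (θ / 2) : ℂ)) ^ (n - k)

theorem natDegree_rotationPoly_le (n k : ℕ) (hk : k ≤ n) (θ : ℝ) :
    (rotationPoly n k θ).natDegree ≤ n := by
  unfold rotationPoly
  refine natDegree_mul_le.trans ?_
  have h₁ := natDegree_pow_le_of_le k (natDegree_linear_le (a := (Real.cos (θ / 2) : ℂ))
    (b := (Real.sin (θ / 2) : ℂ)))
  have h₂ := natDegree_pow_le_of_le (n - k) (natDegree_linear_le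
    (a := (-Real.sin (θ / 2) : ℂ)) (b := (Real.cos (θ / 2) : ℂ)))
  omega

theorem hasDerivAt_ofReal_cos_half (θ : ℝ) :
    HasDerivAt (fun θ : ℝ => (Real.cos (θ / 2) : ℂ)) (-(Real.sin (θ / 2) : ℂ) / 2) θ := by
  refine ((Real.hasDerivAt_cos (θ / 2)).comp θ
    ((hasDerivAt_id θ).div_const 2)).ofReal_comp.congr_deriv ?_
  push_cast; ring

theorem hasDerivAt_ofReal_sin_half (θ : ℝ) :
    HasDerivAt (fun θ : ℝ => (Real.sin (θ / 2) : ℂ)) ((Real.cos (θ / 2) : ℂ) / 2) θ := by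
  refine ((Real.hasDerivAt_sin (θ / 2)).comp θ
    ((hasDerivAt_id θ).div_const 2)).ofReal_comp.congr_deriv ?_
  push_cast; ring

theorem hasCoeffwiseDerivAt_rotationPoly {n k : ℕ} (hk : k ≤ n) (θ : ℝ) :
    HasCoeffwiseDerivAt (rotationPoly n k)
      (C (1 / 2) * rotationGenerator n (rotationPoly n k θ)) θ := by
  have hdu := (hasCoeffwiseDerivAt_C_mul_X_add_C (hasDerivAt_ofReal_cos_half θ)
    (hasDerivAt_ofReal_sin_half θ)).pow k
  have hdv := (hasCoeffwiseDerivAt_C_mul_X_add_C (hasDerivAt_ofReal_sin_half θ).fun_neg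
    (hasDerivAt_ofReal_cos_half θ)).pow (n - k)
  refine (hdu.mul hdv).congr_deriv ?_
  simp only [rotationGenerator, rotationPoly, C_neg]
  generalize (Real.cos (θ / 2) : ℂ) = a
  generalize (Real.sin (θ / 2) : ℂ) = b
  obtain ⟨m, rfl⟩ := Nat.exists_eq_add_of_le hk
  rw [Nat.add_sub_cancel_left]
  have hu := C_natCast_mul_pow_pred_mul (C a * X + C b) k
  have hv := C_natCast_mul_pow_pred_mul (-C b * X + C a) m
  have hn : C ((k + m : ℕ) : ℂ) = C (k : ℂ) + C (m : ℂ) := by rw [Nat.cast_add, C_add]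
  simp only [derivative_mul, derivative_pow, derivative_add, derivative_C, derivative_X,
    derivative_neg, div_eq_mul_inv, one_mul, C_mul, C_neg]
  -- `u = a X + b` and `v = -b X + a` satisfy `(1 + X²) u' - X u = v`, `(1 + X²) v' - X v = -u`.
  linear_combination (-(C 2⁻¹) * X * (-C b * X + C a) ^ m) * hu +
    (-(C 2⁻¹) * X * (C a * X + C b) ^ k) * hv +
    (C 2⁻¹ * X * (C a * X + C b) ^ k * (-C b * X + C a) ^ m) * hn
noncomputable def monomialNorm (n j : ℕ) : ℝ := √((j ! * (n - j)! : ℕ))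

theorem monomialNorm_pos (n j : ℕ) : 0 < monomialNorm n j :=
  Real.sqrt_pos.2 (by positivity)

theorem sqrt_mul_sqrt_eq_of_mul_eq {a b c d : ℕ} (h : a * b = c ^ 2 * d) :
    √(a : ℝ) * √(b : ℝ) = c * √(d : ℝ) := by
  rw [← Real.sqrt_mul (Nat.cast_nonneg _), ← Nat.cast_mul, h, Nat.cast_mul,
    Real.sqrt_mul (by positivity), Nat.cast_pow, Real.sqrt_sq (Nat.cast_nonneg _)]

theorem sqrt_mul_monomialNorm_succ {n j : ℕ} (hj : j < n) :
    √((j + 1) * (n - j)) * monomialNorm n (j + 1) = (j + 1) * monomialNorm n j := by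
  obtain ⟨m, rfl⟩ := Nat.exists_eq_add_of_lt hj
  have h := sqrt_mul_sqrt_eq_of_mul_eq (a := (j + 1) * (m + 1)) (b := (j + 1)! * m !)
    (c := j + 1) (d := j ! * (m + 1)!) (by simp only [Nat.factorial_succ]; ring)
  simp only [monomialNorm, show j + m + 1 - (j + 1) = m by omega,
    show j + m + 1 - j = m + 1 by omega]
  push_cast at h ⊢
  rwa [show (j : ℝ) + m + 1 - j = m + 1 by ring]

theorem sqrt_mul_monomialNorm {n j : ℕ} (hj : j < n) :
    √((j + 1) * (n - j)) * monomialNorm n j = (n - j) * monomialNorm n (j + 1) := by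
  obtain ⟨m, rfl⟩ := Nat.exists_eq_add_of_lt hj
  have h := sqrt_mul_sqrt_eq_of_mul_eq (a := (j + 1) * (m + 1)) (b := j ! * (m + 1)!)
    (c := m + 1) (d := (j + 1)! * m !) (by simp only [Nat.factorial_succ]; ring)
  simp only [monomialNorm, show j + m + 1 - (j + 1) = m by omega,
    show j + m + 1 - j = m + 1 by omega]
  push_cast at h ⊢
  rwa [show (j : ℝ) + m + 1 - j = m + 1 by ring]

/-- In the basis `x^j y^(n-j) / √(j! (n-j)!)`, `rotationGenerator n` acts as `S₋ - S₊`. -/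
theorem monomialNorm_mul_coeff_rotationGenerator {n j : ℕ} {f : ℂ[X]} (hf : f.natDegree ≤ n)
    (hj : j ≤ n) :
    monomialNorm n j * (rotationGenerator n f).coeff j =
      √((j + 1) * (n - j)) * monomialNorm n (j + 1) * f.coeff (j + 1) -
        √(j * (n - j + 1)) * monomialNorm n (j - 1) * f.coeff (j - 1) := by
  have raise : ∀ i ≤ n, (√((i + 1) * (n - i)) * monomialNorm n (i + 1) : ℂ) * f.coeff (i + 1) =
      (i + 1) * monomialNorm n i * f.coeff (i + 1) := by
    intro i hi
    rcases hi.lt_or_eq with hi | rfl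
    · exact_mod_cast
        congrArg (fun x : ℝ => (x : ℂ) * f.coeff (i + 1)) (sqrt_mul_monomialNorm_succ hi)
    · simp [coeff_eq_zero_of_natDegree_lt (hf.trans_lt (Nat.lt_succ_self i))]
  rcases j with _ | i
  · simpa [coeff_rotationGenerator_zero] using (raise 0 (Nat.zero_le n)).symm
  · have lower : (√((i + 1) * (n - i)) * monomialNorm n i : ℂ) =
        (n - i) * monomialNorm n (i + 1) := by
      exact_mod_cast sqrt_mul_monomialNorm (n := n) (j := i) hj
    have := raise (i + 1) hj
    rw [coeff_rotationGenerator_succ, Nat.add_sub_cancel]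
    push_cast at this ⊢
    rw [show ((i : ℝ) + 1) * (n - (i + 1) + 1) = (i + 1) * (n - i) by ring]
    linear_combination -this + f.coeff i * lower

noncomputable def wignerEntry (n : ℕ) (θ : ℝ) (j k : ℕ) : ℂ :=
  (monomialNorm n j / monomialNorm n k : ℝ) * (rotationPoly n k θ).coeff j

theorem hasDerivAt_wignerEntry {n j k : ℕ} (hj : j ≤ n) (hk : k ≤ n) (θ : ℝ) :
    HasDerivAt (fun θ => wignerEntry n θ j k)
      ((√((j + 1) * (n - j)) * wignerEntry n θ (j + 1) k -
        √(j * (n - j + 1)) * wignerEntry n θ (j - 1) k) / 2) θ := by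
  refine ((hasCoeffwiseDerivAt_rotationPoly hk θ j).const_mul
    ((monomialNorm n j / monomialNorm n k : ℝ) : ℂ)).congr_deriv ?_
  have h := monomialNorm_mul_coeff_rotationGenerator (natDegree_rotationPoly_le n k hk θ) hj
  have hN : (monomialNorm n k : ℂ) ≠ 0 := by exact_mod_cast (monomialNorm_pos n k).ne'
  simp only [wignerEntry, coeff_C_mul, Complex.ofReal_div]
  field_simp
  linear_combination h

theorem wignerEntry_zero {n j k : ℕ} : wignerEntry n 0 j k = if j = k then 1 else 0 := by
  have hN : (monomialNorm n k : ℂ) ≠ 0 := by exact_mod_cast (monomialNorm_pos n k).ne'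
  simp only [wignerEntry, rotationPoly]
  split_ifs with h
  · subst h; simp [hN]
  · simp [coeff_X_pow, h]

theorem choose_mul_choose_mul_factorials {n j k t : ℕ} (h₁ : t ≤ j) (h₂ : t + k ≤ n)
    (h₃ : j ≤ t + k) :
    (n - k).choose t * k.choose (j - t) * ((j - t)! * (n - k - t)! * t ! * (t + k - j)!) =
      k ! * (n - k)! := by
  have e₁ := Nat.choose_mul_factorial_mul_factorial (show t ≤ n - k by omega)
  have e₂ := Nat.choose_mul_factorial_mul_factorial (show j - t ≤ k by omega)
  rw [show k - (j - t) = t + k - j by omega] at e₂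
  rw [← e₁, ← e₂]
  ring

theorem monomialNorm_div_mul_choose_mul_choose {n j k t : ℕ} (h₁ : t ≤ j) (h₂ : t + k ≤ n)
    (h₃ : j ≤ t + k) :
    monomialNorm n j / monomialNorm n k * ((n - k).choose t * k.choose (j - t) : ℕ) =
      √((j ! * (n - j)! * k ! * (n - k)! : ℕ)) /
        ((j - t)! * (n - k - t)! * t ! * (t + k - j)! : ℕ) := by
  have hsqrt : √((j ! * (n - j)! * k ! * (n - k)! : ℕ)) = monomialNorm n j * monomialNorm n k := by
    rw [monomialNorm, monomialNorm, ← Real.sqrt_mul (Nat.cast_nonneg _), ← Nat.cast_mul, mul_assoc,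
      mul_assoc]
  have hk : monomialNorm n k ^ 2 = ((k ! * (n - k)! : ℕ) : ℝ) := Real.sq_sqrt (Nat.cast_nonneg _)
  have hN := (monomialNorm_pos n k).ne'
  rw [hsqrt, eq_div_iff (by positivity), mul_assoc, ← Nat.cast_mul,
    choose_mul_choose_mul_factorials h₁ h₂ h₃, ← hk]
  field_simp

theorem wignerEntry_eq_sum {n j k : ℕ} (hj : j ≤ n) (hk : k ≤ n) (θ : ℝ) :
    wignerEntry n θ j k =
      ∑ t ∈ Finset.range (n + 1),
        if t ≤ j ∧ t + k ≤ n ∧ j ≤ t + k then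
          ((-1 : ℂ) ^ t *
            ((√((j ! * (n - j)! * k ! * (n - k)! : ℕ)) /
              (((j - t)! * (n - k - t)! * t ! * (t + k - j)! : ℕ)) : ℝ) : ℂ) *
            ((Real.cos (θ / 2) : ℂ) ^ ((j - t) + (n - k - t))) *
            ((Real.sin (θ / 2) : ℂ) ^ (t + (t + k - j))))
        else 0 := by
  rw [wignerEntry, rotationPoly, mul_comm (_ ^ k), coeff_mul,
    Finset.Nat.sum_antidiagonal_eq_sum_range_succ (fun a b => coeff _ a * coeff _ b),
    Finset.mul_sum, ← Finset.sum_subset (Finset.range_subset_range.2 (show j + 1 ≤ n + 1 by omega))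
    (fun t _ ht => if_neg (by simp at ht; omega))]
  refine Finset.sum_congr rfl fun t ht => ?_
  rw [Finset.mem_range] at ht
  rw [coeff_C_mul_X_add_C_pow, coeff_C_mul_X_add_C_pow]
  split_ifs with hguard
  · obtain ⟨h₁, h₂, h₃⟩ := hguard
    rw [← monomialNorm_div_mul_choose_mul_choose h₁ h₂ h₃, show k - (j - t) = t + k - j by omega]
    push_cast
    ring
  · rcases (show n - k < t ∨ k < j - t by omega) with h | h <;> simp [Nat.choose_eq_zero_of_lt h]

theorem Sp_mul_of_apply {n : ℕ} (f : ℕ → ℕ → ℂ) (j k : Fin (n + 1)) :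
    (Sp n * Matrix.of fun i l : Fin (n + 1) => f i l) j k = √(j * (n - j + 1)) * f (j - 1) k := by
  simp only [Matrix.mul_apply, Sp, Matrix.of_apply, ite_mul, zero_mul]
  rcases j with ⟨_ | i, hi⟩
  · simp
  · rw [Finset.sum_eq_single ⟨i, by omega⟩
      (fun b _ hb => if_neg fun h => hb (Fin.ext (by simp at h ⊢; omega))) (by simp), if_pos rfl]
    simp only [Nat.cast_add, Nat.cast_one, Nat.add_sub_cancel]
    congr 3
    ring

theorem Sm_mul_of_apply {n : ℕ} (f : ℕ → ℕ → ℂ) (j k : Fin (n + 1)) :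
    (Sm n * Matrix.of fun i l : Fin (n + 1) => f i l) j k = √((j + 1) * (n - j)) * f (j + 1) k := by
  simp only [Matrix.mul_apply, Sm, Sp, Matrix.conjTranspose_apply, Matrix.of_apply, apply_ite star,
    star_zero, Complex.star_def, Complex.conj_ofReal, ite_mul, zero_mul]
  by_cases hj : (j : ℕ) = n
  · simp [hj]
  · rw [Finset.sum_eq_single ⟨j + 1, by omega⟩
      (fun b _ hb => if_neg fun h => hb (Fin.ext (by simp at h ⊢; omega))) (by simp)]
    simp

noncomputable def wignerMatrix (n : ℕ) (θ : ℝ) : Matrix (Fin (n + 1)) (Fin (n + 1)) ℂ :=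
  Matrix.of fun j k => wignerEntry n θ j k

theorem hasDerivAt_wignerMatrix_apply (n : ℕ) (θ : ℝ) (j k : Fin (n + 1)) :
    HasDerivAt (fun θ => wignerMatrix n θ j k)
      (((2⁻¹ : ℂ) • (Sm n - Sp n) * wignerMatrix n θ) j k) θ := by
  simp only [wignerMatrix, Matrix.smul_mul, Matrix.sub_mul, Matrix.smul_apply, Matrix.sub_apply,
    Sp_mul_of_apply, Sm_mul_of_apply, smul_eq_mul, Matrix.of_apply]
  exact (hasDerivAt_wignerEntry j.is_le k.is_le θ).congr_deriv (by ring)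

theorem wignerMatrix_zero (n : ℕ) : wignerMatrix n 0 = 1 := by
  ext j k
  simp [wignerMatrix, wignerEntry_zero, Matrix.one_apply, Fin.ext_iff]

theorem neg_I_mul_smul_S2 (n : ℕ) (θ : ℝ) :
    (-Complex.I * (θ : ℂ)) • S2 n = θ • ((2⁻¹ : ℂ) • (Sm n - Sp n)) := by
  have h : -Complex.I * (θ : ℂ) * (2 * Complex.I)⁻¹ = -(θ * 2⁻¹) := by
    field_simp
  rw [S2, smul_smul, h, neg_smul, ← smul_neg, neg_sub, ← smul_smul, Complex.coe_smul]

attribute [local instance] Matrix.normedAddCommGroup Matrix.normedSpace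

/-- Majorana–Wigner formula for the reduced rotation matrix `r^{(s)}(θ) = exp(-iθS₂)`.
The sum runs over all integers `t ≥ 0` with `j - t ≥ 0`, `n - k - t ≥ 0` and
`t - j + k ≥ 0` (any such `t` satisfies `t ≤ n`, so summing over `t < n + 1` is
equivalent).  The exponents `n + j - k - 2t` and `2t - j + k` are written in the
equivalent nonnegative forms `(j - t) + (n - k - t)` and `t + (t + k - j)`. -/
theorem majorana_wigner_formula (n : ℕ) (θ : ℝ) (j k : Fin (n+1)) :
    NormedSpace.exp ((-Complex.I * (θ : ℂ)) • S2 n) j k =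
      ∑ t ∈ Finset.range (n+1),
        if t ≤ (j : ℕ) ∧ t + (k : ℕ) ≤ n ∧ (j : ℕ) ≤ t + (k : ℕ) then
          ((-1 : ℂ) ^ t *
            ((Real.sqrt (((j : ℕ)! * (n - (j : ℕ))! * (k : ℕ)! * (n - (k : ℕ))! : ℕ)) /
              ((((j : ℕ) - t)! * (n - (k : ℕ) - t)! * t ! * (t + (k : ℕ) - (j : ℕ))! : ℕ)) : ℝ) : ℂ) *
            ((Real.cos (θ / 2) : ℂ) ^ (((j : ℕ) - t) + (n - (k : ℕ) - t))) *
            ((Real.sin (θ / 2) : ℂ) ^ (t + (t + (k : ℕ) - (j : ℕ)))))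
        else 0 := by
  rw [neg_I_mul_smul_S2, Matrix.exp_smul_eq_of_hasDerivAt_apply
    (hasDerivAt_wignerMatrix_apply n) (wignerMatrix_zero n) θ]
  exact wignerEntry_eq_sum j.is_le k.is_le θ
end

section
/- Adjoint action of rotations on the spin operators: for every n : ℕ and all φ, θ, ψ ∈ ℝ, with R = R(φ,θ,ψ): (i) Rᴴ S₃ R = cos θ · S₃ − (1/2) sin θ · ( e^{iψ} S₊ + e^{−iψ} S₋ ); (ii) Rᴴ S₊ R = e^{iφ} [ sin θ · S₃ + (1/2)( (cos θ + 1) e^{iψ} S₊ + (cos θ − 1) e^{−iψ} S₋ ) ]; (iii) Rᴴ S₋ R = e^{−iφ} [ sin θ · S₃ + (1/2)( (cos θ − 1) e^{iψ} S₊ + (cos θ + 1) e^{−iψ} S₋ ) ]. -/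
open Matrix Complex

attribute [local instance] Matrix.normedAddCommGroup Matrix.normedSpace

/-- Rotation matrix `R(φ,θ,ψ) = exp(-iφS₃)·exp(-iθS₂)·exp(-iψS₃)`. -/
noncomputable def Rot (n : ℕ) (φ θ ψ : ℝ) : Matrix (Fin (n+1)) (Fin (n+1)) ℂ :=
  NormedSpace.exp ((-Complex.I * (φ : ℂ)) • S3 n) *
    NormedSpace.exp ((-Complex.I * (θ : ℂ)) • S2 n) *
      NormedSpace.exp ((-Complex.I * (ψ : ℂ)) • S3 n)

/-!
Conjugation by `exp A` multiplies an eigenvector of `ad A` with eigenvalue `c` by `exp c`.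
The commutation relations `[S₃, S±] = ±S±` make `S±` eigenvectors of `ad S₃`, and together with
`[S₊, S₋] = 2 S₃` they make `S₃ ± (i/2)(S₊ + S₋)` eigenvectors of `ad (i S₂)` with eigenvalues
`± i`, while `S₊ - S₋` commutes with `S₂`. As `Rᴴ X R` is conjugation of `X` by
`exp (i φ S₃)`, then `exp (i θ S₂)`, then `exp (i ψ S₃)`, the three formulas follow by linearity.
-/

attribute [local instance] LieRing.ofAssociativeRing

section BanachAlgebra

variable {𝔸 : Type*} [NormedRing 𝔸] [NormedAlgebra ℂ 𝔸] [CompleteSpace 𝔸]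

/-- `W` intertwines `A + c` with `A`, hence also `exp (A + c)` with `exp A`. -/
theorem exp_mul_mul_exp_neg_of_lie_eq_smul {A W : 𝔸} {c : ℂ} (h : ⁅A, W⁆ = c • W) :
    NormedSpace.exp A * W * NormedSpace.exp (-A) = Complex.exp c • W := by
  let _ : NormedAlgebra ℚ 𝔸 := NormedAlgebra.restrictScalars ℚ ℂ 𝔸
  have hsemi : SemiconjBy W (A + algebraMap ℂ 𝔸 c) A := by
    rw [SemiconjBy, mul_add, ← Algebra.commutes, ← Algebra.smul_def, ← h, Ring.lie_def]
    abel
  have hexp := hsemi.exp_right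
  rw [NormedSpace.exp_add_of_commute (Algebra.commutes c A).symm,
    ← NormedSpace.algebraMap_exp_comm, ← Algebra.commutes, ← Algebra.smul_def, SemiconjBy,
    mul_smul_comm, ← Complex.exp_eq_exp_ℂ] at hexp
  rw [← hexp, smul_mul_assoc, mul_assoc,
    ← NormedSpace.exp_add_of_commute (Commute.refl A).neg_right, add_neg_cancel,
    NormedSpace.exp_zero, mul_one]

/-- `X ∓ i Y` are eigenvectors of `ad A` with eigenvalues `± i`. -/
theorem exp_smul_mul_mul_exp_neg_smul_of_lie_eq {A X Y : 𝔸} (hXY : ⁅A, X⁆ = Y)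
    (hYX : ⁅A, Y⁆ = -X) (t : ℂ) :
    NormedSpace.exp (t • A) * X * NormedSpace.exp (-(t • A)) = cos t • X + sin t • Y := by
  have eigen : ∀ ε : ℂ, ε ^ 2 = -1 → NormedSpace.exp (t • A) * (X - ε • Y) *
      NormedSpace.exp (-(t • A)) = Complex.exp (t * ε) • (X - ε • Y) := by
    intro ε hε
    apply exp_mul_mul_exp_neg_of_lie_eq_smul
    rw [smul_lie, lie_sub, lie_smul, hXY, hYX]
    linear_combination (norm := module) t • hε • Y
  have hX : X = (1 / 2 : ℂ) • ((X - I • Y) + (X - (-I) • Y)) := by module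
  conv_lhs => rw [hX, mul_smul_comm, smul_mul_assoc, mul_add, add_mul, eigen I I_sq,
    eigen (-I) (by simp), mul_neg, ← neg_mul, exp_mul_I, exp_mul_I, cos_neg, sin_neg]
  linear_combination (norm := module) (-sin t) • I_sq • Y

end BanachAlgebra

theorem conjTranspose_exp_neg_I_mul_smul {m : Type*} [Fintype m] [DecidableEq m]
    {H : Matrix m m ℂ} (hH : H.IsHermitian) (x : ℝ) :
    (NormedSpace.exp (-((I * x) • H)))ᴴ = NormedSpace.exp ((I * x) • H) := by
  rw [← Matrix.exp_conjTranspose, conjTranspose_neg, conjTranspose_smul, hH.eq]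
  simp

section SpinOperators

open scoped Norms.Operator

variable (n : ℕ)

theorem isHermitian_S3 : (S3 n).IsHermitian :=
  isHermitian_diagonal_of_self_adjoint _ <| by
    ext j
    simp

theorem isHermitian_S2 : (S2 n).IsHermitian := by
  have hstar : star (2 * I)⁻¹ = -(2 * I)⁻¹ := by simp
  rw [IsHermitian, S2, conjTranspose_smul, conjTranspose_sub, Sm, conjTranspose_conjTranspose,
    hstar, neg_smul, ← smul_neg, neg_sub]

theorem I_smul_S2 : I • S2 n = (1 / 2 : ℂ) • (Sp n - Sm n) := by
  rw [S2, smul_smul]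
  congr 1
  field_simp

theorem lie_S3_Sp : ⁅S3 n, Sp n⁆ = Sp n := by
  ext j k
  simp only [Ring.lie_def, S3, Sp, diagonal_mul, mul_diagonal, Matrix.sub_apply, of_apply]
  split_ifs with h
  · have hjk : ((j : ℕ) : ℂ) = (k : ℕ) + 1 := by exact_mod_cast h
    rw [hjk]
    ring
  · simp

theorem lie_S3_Sm : ⁅S3 n, Sm n⁆ = -Sm n := by
  have h := congrArg conjTranspose (lie_S3_Sp n)
  rw [Ring.lie_def, conjTranspose_sub, conjTranspose_mul, conjTranspose_mul,
    (isHermitian_S3 n).eq] at h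
  rw [Ring.lie_def, Sm, ← neg_sub, h]

theorem Sm_mul_Sp_apply (j l : Fin (n + 1)) :
    (Sm n * Sp n) j l = if j = l then ((j : ℂ) + 1) * (n - j) else 0 := by
  simp only [Sm, mul_apply, conjTranspose_apply, Sp, of_apply]
  rw [Fin.sum_univ_eq_sum_range fun x =>
    star (if x = (j : ℕ) + 1 then ((√((j + 1) * (n - j)) : ℝ) : ℂ) else 0) *
      (if x = (l : ℕ) + 1 then ((√((l + 1) * (n - l)) : ℝ) : ℂ) else 0)]
  simp only [mul_ite, mul_zero, Finset.sum_ite_eq', Finset.mem_range, add_lt_add_iff_right,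
    add_left_inj, Fin.val_inj]
  rcases eq_or_ne j l with rfl | hjl
  · have ha : 0 ≤ ((j : ℝ) + 1) * (n - j) :=
      mul_nonneg (by positivity) (sub_nonneg.2 (by exact_mod_cast Fin.is_le j))
    rw [if_pos rfl, if_pos rfl]
    split_ifs with hj
    · rw [Complex.star_def, conj_ofReal, ← ofReal_mul, Real.mul_self_sqrt ha]
      push_cast; ring
    · simp [show (j : ℕ) = n by omega]
  · simp [hjl, Ne.symm hjl]

theorem Sp_mul_Sm_apply (j l : Fin (n + 1)) :
    (Sp n * Sm n) j l = if j = l then (j : ℂ) * (n + 1 - j) else 0 := by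
  simp only [Sm, mul_apply, conjTranspose_apply, Sp, of_apply]
  rw [Fin.sum_univ_eq_sum_range fun x =>
    (if (j : ℕ) = x + 1 then ((√((x + 1) * (n - x)) : ℝ) : ℂ) else 0) *
      star (if (l : ℕ) = x + 1 then ((√((x + 1) * (n - x)) : ℝ) : ℂ) else 0)]
  rcases Nat.eq_zero_or_pos j with hj | hj
  · simp [hj]
  obtain ⟨i, hi⟩ := Nat.exists_eq_add_one.2 hj
  have ha : 0 ≤ ((i : ℝ) + 1) * (n - i) :=
    mul_nonneg (by positivity) (sub_nonneg.2 (by exact_mod_cast (by omega : i ≤ n)))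
  simp only [hi, ite_mul, zero_mul, add_left_inj, Finset.sum_ite_eq, Finset.mem_range]
  rw [if_pos (by omega), ← hi]
  rcases eq_or_ne j l with rfl | hjl
  · rw [if_pos rfl, if_pos rfl, Complex.star_def, conj_ofReal, ← ofReal_mul,
      Real.mul_self_sqrt ha, hi]
    push_cast; ring
  · simp [hjl, Fin.val_inj, Ne.symm hjl]

theorem lie_Sp_Sm : ⁅Sp n, Sm n⁆ = (2 : ℂ) • S3 n := by
  ext j l
  rw [Ring.lie_def, Matrix.sub_apply, Sp_mul_Sm_apply, Sm_mul_Sp_apply, Matrix.smul_apply, S3,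
    diagonal_apply]
  split_ifs
  · simp only [smul_eq_mul]; ring
  · simp

theorem exp_smul_S3_conj_S3 (z : ℂ) :
    NormedSpace.exp (z • S3 n) * S3 n * NormedSpace.exp (-(z • S3 n)) = S3 n := by
  refine (exp_mul_mul_exp_neg_of_lie_eq_smul (c := 0) ?_).trans ?_ <;> simp

theorem exp_smul_S3_conj_Sp (z : ℂ) :
    NormedSpace.exp (z • S3 n) * Sp n * NormedSpace.exp (-(z • S3 n)) = Complex.exp z • Sp n :=
  exp_mul_mul_exp_neg_of_lie_eq_smul <| by rw [smul_lie, lie_S3_Sp]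

theorem exp_smul_S3_conj_Sm (z : ℂ) :
    NormedSpace.exp (z • S3 n) * Sm n * NormedSpace.exp (-(z • S3 n)) =
      Complex.exp (-z) • Sm n :=
  exp_mul_mul_exp_neg_of_lie_eq_smul <| by rw [smul_lie, lie_S3_Sm, smul_neg, neg_smul]

theorem lie_I_smul_S2_S3 : ⁅I • S2 n, S3 n⁆ = -((1 / 2 : ℂ) • (Sp n + Sm n)) := by
  rw [I_smul_S2, smul_lie, sub_lie, ← lie_skew, lie_S3_Sp, ← lie_skew (Sm n), lie_S3_Sm]
  module

theorem lie_I_smul_S2_Sp_add_Sm : ⁅I • S2 n, Sp n + Sm n⁆ = (2 : ℂ) • S3 n := by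
  rw [I_smul_S2, smul_lie, sub_lie, lie_add, lie_add, lie_self, lie_self,
    ← lie_skew (Sm n) (Sp n), lie_Sp_Sm]
  module

theorem exp_I_smul_S2_conj_S3 (t : ℂ) :
    NormedSpace.exp ((I * t) • S2 n) * S3 n * NormedSpace.exp (-((I * t) • S2 n)) =
      cos t • S3 n - (sin t / 2) • (Sp n + Sm n) := by
  rw [mul_comm, mul_smul]
  refine (exp_smul_mul_mul_exp_neg_smul_of_lie_eq (lie_I_smul_S2_S3 n) ?_ t).trans ?_
  · rw [lie_neg, lie_smul, lie_I_smul_S2_Sp_add_Sm]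
    module
  · module

theorem exp_I_smul_S2_conj_Sp_add_Sm (t : ℂ) :
    NormedSpace.exp ((I * t) • S2 n) * (Sp n + Sm n) * NormedSpace.exp (-((I * t) • S2 n)) =
      cos t • (Sp n + Sm n) + (2 * sin t) • S3 n := by
  rw [mul_comm, mul_smul]
  refine (exp_smul_mul_mul_exp_neg_smul_of_lie_eq (lie_I_smul_S2_Sp_add_Sm n) ?_ t).trans ?_
  · rw [lie_smul, lie_I_smul_S2_S3]
    module
  · module

theorem exp_I_smul_S2_conj_Sp_sub_Sm (t : ℂ) :
    NormedSpace.exp ((I * t) • S2 n) * (Sp n - Sm n) * NormedSpace.exp (-((I * t) • S2 n)) =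
      Sp n - Sm n := by
  refine (exp_mul_mul_exp_neg_of_lie_eq_smul (c := 0) ?_).trans ?_
  · rw [mul_comm, mul_smul, I_smul_S2]
    simp
  · simp

theorem exp_I_smul_S2_conj_Sp (t : ℂ) :
    NormedSpace.exp ((I * t) • S2 n) * Sp n * NormedSpace.exp (-((I * t) • S2 n)) =
      sin t • S3 n + ((cos t + 1) / 2) • Sp n + ((cos t - 1) / 2) • Sm n := by
  have h : Sp n = (1 / 2 : ℂ) • (Sp n + Sm n) + (1 / 2 : ℂ) • (Sp n - Sm n) := by module
  conv_lhs => rw [h, mul_add, add_mul, mul_smul_comm, smul_mul_assoc, mul_smul_comm,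
    smul_mul_assoc, exp_I_smul_S2_conj_Sp_add_Sm, exp_I_smul_S2_conj_Sp_sub_Sm]
  module

theorem exp_I_smul_S2_conj_Sm (t : ℂ) :
    NormedSpace.exp ((I * t) • S2 n) * Sm n * NormedSpace.exp (-((I * t) • S2 n)) =
      sin t • S3 n + ((cos t - 1) / 2) • Sp n + ((cos t + 1) / 2) • Sm n := by
  have h : Sm n = (1 / 2 : ℂ) • (Sp n + Sm n) - (1 / 2 : ℂ) • (Sp n - Sm n) := by module
  conv_lhs => rw [h, mul_sub, sub_mul, mul_smul_comm, smul_mul_assoc, mul_smul_comm,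
    smul_mul_assoc, exp_I_smul_S2_conj_Sp_add_Sm, exp_I_smul_S2_conj_Sp_sub_Sm]
  module

theorem conjTranspose_Rot_mul_mul_Rot (φ θ ψ : ℝ) (X : Matrix (Fin (n + 1)) (Fin (n + 1)) ℂ) :
    (Rot n φ θ ψ)ᴴ * X * Rot n φ θ ψ =
      NormedSpace.exp ((I * ψ) • S3 n) *
        (NormedSpace.exp ((I * θ) • S2 n) *
          (NormedSpace.exp ((I * φ) • S3 n) * X * NormedSpace.exp (-((I * φ) • S3 n))) *
          NormedSpace.exp (-((I * θ) • S2 n))) *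
        NormedSpace.exp (-((I * ψ) • S3 n)) := by
  simp only [Rot, neg_mul, neg_smul, conjTranspose_mul,
    conjTranspose_exp_neg_I_mul_smul (isHermitian_S3 n),
    conjTranspose_exp_neg_I_mul_smul (isHermitian_S2 n), mul_assoc]

end SpinOperators

/-- Adjoint action of rotations on the spin operators `S₃`, `S₊`, `S₋`. -/
theorem rotation_adjoint_action (n : ℕ) (φ θ ψ : ℝ) :
    (Rot n φ θ ψ)ᴴ * S3 n * Rot n φ θ ψ =
        (Real.cos θ : ℂ) • S3 n -
          ((1 / 2 : ℂ) * (Real.sin θ : ℂ)) •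
            (Complex.exp (Complex.I * (ψ : ℂ)) • Sp n +
              Complex.exp (-(Complex.I * (ψ : ℂ))) • Sm n) ∧
      (Rot n φ θ ψ)ᴴ * Sp n * Rot n φ θ ψ =
        Complex.exp (Complex.I * (φ : ℂ)) •
          ((Real.sin θ : ℂ) • S3 n +
            (1 / 2 : ℂ) •
              ((((Real.cos θ : ℂ) + 1) * Complex.exp (Complex.I * (ψ : ℂ))) • Sp n +
                (((Real.cos θ : ℂ) - 1) * Complex.exp (-(Complex.I * (ψ : ℂ)))) • Sm n)) ∧
      (Rot n φ θ ψ)ᴴ * Sm n * Rot n φ θ ψ =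
        Complex.exp (-(Complex.I * (φ : ℂ))) •
          ((Real.sin θ : ℂ) • S3 n +
            (1 / 2 : ℂ) •
              ((((Real.cos θ : ℂ) - 1) * Complex.exp (Complex.I * (ψ : ℂ))) • Sp n +
                (((Real.cos θ : ℂ) + 1) * Complex.exp (-(Complex.I * (ψ : ℂ)))) • Sm n)) := by
  refine ⟨?_, ?_, ?_⟩ <;>
  · simp only [conjTranspose_Rot_mul_mul_Rot, mul_add, add_mul, mul_sub, sub_mul, mul_smul_comm,
      smul_mul_assoc, exp_smul_S3_conj_S3, exp_smul_S3_conj_Sp, exp_smul_S3_conj_Sm,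
      exp_I_smul_S2_conj_S3, exp_I_smul_S2_conj_Sp, exp_I_smul_S2_conj_Sm, ← ofReal_cos,
      ← ofReal_sin]
    module
end
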